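/- For nonnegative integers a, b with a + b ≥ 1, the word 0^a 10101 0^b is Ulam if and only if both a and b are even and at least one of a, b is zero. -/

import Mathlib

/-- Ulam words with fuel bounding the recursion depth (fuel ≥ length suffices). -/
def UlamN : ℕ → List Bool → Prop
  | 0, _ => False
  | n + 1, w =>
    w = [false] ∨ w = [true] ∨
      ∃! p : List Bool × List Bool,
        p.1 ≠ [] ∧ p.2 ≠ [] ∧ UlamN n p.1 ∧ UlamN n p.2 ∧ p.1 ≠ p.2 ∧ p.1 ++ p.2 = w

/-- A word over {0,1} (`false` = 0, `true` = 1) is Ulam. -/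
def IsUlam (w : List Bool) : Prop := UlamN w.length w

/-- The integer whose binary representation (most significant digit first) is `w`. -/
def binVal (w : List Bool) : ℕ := w.foldl (fun acc b => 2 * acc + b.toNat) 0

/-! A split of `0^a M 0^b` into two Ulam words either splits off a single `0` at one end (a
block of two or more zeros is never Ulam) or cuts `M` itself. For `M = 1, 101, 10101` this
expresses the Ulam property of `0^a M 0^b` through words of the same shapes with less padding,
and induction on the padding gives: `0^a 1` and `1 0^b` are always Ulam, `0^a 10` iff `a` is
even, `101 0^b` iff `b` is odd and at least 3, and `0101 0^b` and `10101 0^b` iff `b` is even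
and at least 2. When `a, b ≥ 1`, an even `a` (or `b`, after reversal) yields two splits of
`0^a 10101 0^b`, one of them `0^a 1010 + 1 0^b`, while odd `a` and `b` leave none. -/

open List

def IsUlamSplit (w : List Bool) (p : List Bool × List Bool) : Prop :=
  IsUlam p.1 ∧ IsUlam p.2 ∧ p.1 ≠ p.2 ∧ p.1 ++ p.2 = w

lemma not_ulamN_nil (n : ℕ) : ¬ UlamN n [] := by
  cases n with
  | zero => exact id
  | succ n =>
    rintro (h | h | ⟨p, ⟨h1, -, -, -, -, h⟩, -⟩)
    · cases h
    · cases h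
    · exact h1 (append_eq_nil_iff.mp h).1

lemma ulamN_iff_ulamN {w : List Bool} {m n : ℕ} (hm : w.length ≤ m) (hn : w.length ≤ n) :
    UlamN m w ↔ UlamN n w := by
  induction m generalizing w n with
  | zero =>
    obtain rfl : w = [] := eq_nil_of_length_eq_zero (by omega)
    exact iff_of_false (not_ulamN_nil 0) (not_ulamN_nil n)
  | succ m ih =>
    rcases eq_or_ne w [] with rfl | hw
    · exact iff_of_false (not_ulamN_nil _) (not_ulamN_nil n)
    obtain ⟨n, rfl⟩ : ∃ n', n = n' + 1 := ⟨n - 1, by have := length_pos_iff.mpr hw; omega⟩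
    refine or_congr Iff.rfl (or_congr Iff.rfl (existsUnique_congr fun p => ?_))
    refine and_congr_right fun h1 => and_congr_right fun h2 => ?_
    have key : p.1 ++ p.2 = w →
        (UlamN m p.1 ↔ UlamN n p.1) ∧ (UlamN m p.2 ↔ UlamN n p.2) := by
      intro h
      have hl := congrArg length h
      have := length_pos_iff.mpr h1
      have := length_pos_iff.mpr h2
      simp only [length_append] at hl
      exact ⟨ih (by omega) (by omega), ih (by omega) (by omega)⟩
    exact ⟨fun ⟨h3, h4, h5, h6⟩ => ⟨(key h6).1.1 h3, (key h6).2.1 h4, h5, h6⟩,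
      fun ⟨h3, h4, h5, h6⟩ => ⟨(key h6).1.2 h3, (key h6).2.2 h4, h5, h6⟩⟩

lemma ulamN_iff_isUlam {w : List Bool} {n : ℕ} (h : w.length ≤ n) : UlamN n w ↔ IsUlam w :=
  ulamN_iff_ulamN h le_rfl

lemma IsUlam.ne_nil {w : List Bool} (h : IsUlam w) : w ≠ [] := by
  rintro rfl; exact not_ulamN_nil _ h

lemma isUlam_false : IsUlam [false] := Or.inl rfl

lemma isUlam_true : IsUlam [true] := Or.inr (Or.inl rfl)

lemma isUlam_iff_existsUnique_split {w : List Bool} (hw : 2 ≤ w.length) :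
    IsUlam w ↔ ∃! p, IsUlamSplit w p := by
  obtain ⟨n, hn⟩ : ∃ n, w.length = n + 1 := ⟨w.length - 1, by omega⟩
  have hf : w ≠ [false] := by rintro rfl; simp at hw
  have ht : w ≠ [true] := by rintro rfl; simp at hw
  rw [IsUlam, hn, UlamN, or_iff_right hf, or_iff_right ht]
  refine existsUnique_congr fun p =>
    ⟨fun ⟨h1, h2, h3, h4, h5, h6⟩ => ?_, fun ⟨h3, h4, h5, h6⟩ => ?_⟩
  all_goals
    have hl := congrArg length h6
    simp only [length_append] at hl
  · have := length_pos_iff.mpr h1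
    have := length_pos_iff.mpr h2
    exact ⟨(ulamN_iff_isUlam (by omega)).1 h3, (ulamN_iff_isUlam (by omega)).1 h4, h5, h6⟩
  · have := length_pos_iff.mpr h3.ne_nil
    have := length_pos_iff.mpr h4.ne_nil
    exact ⟨h3.ne_nil, h4.ne_nil, (ulamN_iff_isUlam (by omega)).2 h3,
      (ulamN_iff_isUlam (by omega)).2 h4, h5, h6⟩

lemma isUlam_of_forall_split_eq {w : List Bool} {p : List Bool × List Bool} (hw : 2 ≤ w.length)
    (hp : IsUlamSplit w p) (h : ∀ q, IsUlamSplit w q → q = p) : IsUlam w :=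
  (isUlam_iff_existsUnique_split hw).2 ⟨p, hp, h⟩

lemma not_isUlam_of_split_ne {w : List Bool} {p q : List Bool × List Bool} (hw : 2 ≤ w.length)
    (hp : IsUlamSplit w p) (hq : IsUlamSplit w q) (hpq : p ≠ q) : ¬ IsUlam w := by
  rw [isUlam_iff_existsUnique_split hw]
  exact fun ⟨_, _, h⟩ => hpq ((h p hp).trans (h q hq).symm)

lemma not_isUlam_of_forall_not_split {w : List Bool} (hw : 2 ≤ w.length)
    (h : ∀ p, ¬ IsUlamSplit w p) : ¬ IsUlam w := by
  rw [isUlam_iff_existsUnique_split hw]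
  exact fun ⟨p, hp, _⟩ => h p hp

lemma isUlam_reverse (w : List Bool) : IsUlam w.reverse ↔ IsUlam w := by
  induction h : w.length using Nat.strong_induction_on generalizing w with
  | _ n ih =>
    subst h
    rcases lt_or_ge w.length 2 with hw | hw
    · match w, hw with
      | [], _ | [_], _ => rfl
    rw [isUlam_iff_existsUnique_split hw, isUlam_iff_existsUnique_split (by simpa using hw)]
    have hinv : Function.Involutive fun p : List Bool × List Bool => (p.2.reverse, p.1.reverse) :=
      fun p => by simp
    refine ((hinv.toPerm _).existsUnique_congr fun ⟨u, v⟩ => ?_).symm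
    have hlen : u ++ v = w → u ≠ [] → v ≠ [] →
        u.length < w.length ∧ v.length < w.length := by
      rintro rfl hu hv
      simp [length_pos_iff.mpr hu, length_pos_iff.mpr hv]
    simp only [IsUlamSplit, Function.Involutive.coe_toPerm, ← reverse_append,
      reverse_inj, ne_eq]
    constructor
    · rintro ⟨hu, hv, huv, h⟩
      obtain ⟨hu', hv'⟩ := hlen h hu.ne_nil hv.ne_nil
      exact ⟨(ih _ hv' _ rfl).2 hv, (ih _ hu' _ rfl).2 hu, fun e => huv e.symm, h⟩
    · rintro ⟨hv, hu, hvu, h⟩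
      obtain ⟨hu', hv'⟩ := hlen h (by simpa using hu.ne_nil) (by simpa using hv.ne_nil)
      exact ⟨(ih _ hu' _ rfl).1 hu, (ih _ hv' _ rfl).1 hv, fun e => hvu e.symm, h⟩

lemma isUlam_replicate_false {n : ℕ} : IsUlam (replicate n false) ↔ n = 1 := by
  induction n using Nat.strong_induction_on with
  | _ n ih =>
    rcases lt_or_ge n 2 with hn | hn
    · interval_cases n
      · exact iff_of_false (not_ulamN_nil 0) (by omega)
      · exact iff_of_true isUlam_false rfl
    refine iff_of_false (not_isUlam_of_forall_not_split (by simpa using hn) ?_) (by omega)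
    rintro ⟨u, v⟩ ⟨hu, hv, huv, h⟩
    obtain ⟨hl, hu', hv'⟩ := append_eq_replicate_iff.mp h
    have := length_pos_iff.mpr hu.ne_nil
    have := length_pos_iff.mpr hv.ne_nil
    have hu1 := (ih _ (by omega)).1 (hu' ▸ hu)
    have hv1 := (ih _ (by omega)).1 (hv' ▸ hv)
    exact huv (by rw [hu', hv', hu1, hv1])

def zeroPad (a : ℕ) (M : List Bool) (b : ℕ) : List Bool :=
  replicate a false ++ M ++ replicate b false

section zeroPad

variable {a b : ℕ} {M : List Bool}

@[simp] lemma length_zeroPad : (zeroPad a M b).length = a + M.length + b := by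
  simp [zeroPad, add_assoc]

@[simp] lemma count_true_zeroPad : (zeroPad a M b).count true = M.count true := by
  simp [zeroPad, count_replicate]

lemma zeroPad_succ_left : zeroPad (a + 1) M b = [false] ++ zeroPad a M b := by
  simp [zeroPad, replicate_succ]

lemma zeroPad_succ_right : zeroPad a M (b + 1) = zeroPad a M b ++ [false] := by
  simp [zeroPad, replicate_succ']

lemma reverse_zeroPad : (zeroPad a M b).reverse = zeroPad b M.reverse a := by
  simp [zeroPad]

lemma isUlam_zeroPad_comm (hM : M.reverse = M) :
    IsUlam (zeroPad a M b) ↔ IsUlam (zeroPad b M a) := by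
  rw [← isUlam_reverse, reverse_zeroPad, hM]

lemma IsUlamSplit.zeroPad_cases {p : List Bool × List Bool} (h : IsUlamSplit (zeroPad a M b) p) :
    (∃ a', a = a' + 1 ∧ p = ([false], zeroPad a' M b)) ∨
    (∃ b', b = b' + 1 ∧ p = (zeroPad a M b', [false])) ∨
    ∃ k, 0 < k ∧ k < M.length ∧ p = (zeroPad a (M.take k) 0, zeroPad 0 (M.drop k) b) := by
  obtain ⟨u, v⟩ := p
  obtain ⟨hu, hv, -, h⟩ := h
  have zeros {z : List Bool} {n : ℕ} (hz : IsUlam z) (h : z = replicate n false) :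
      z = [false] := by
    subst h; rw [isUlam_replicate_false.1 hz]; rfl
  rw [zeroPad, append_assoc] at h
  rcases append_eq_append_iff.mp h with ⟨m, hm, rfl⟩ | ⟨m, rfl, hm⟩
  · obtain ⟨hl, hu', hm'⟩ := append_eq_replicate_iff.mp hm.symm
    obtain rfl := zeros hu hu'
    exact Or.inl ⟨m.length, by simpa [add_comm] using hl.symm, by simp [zeroPad, ← hm']⟩
  rcases append_eq_append_iff.mp hm with ⟨c, rfl, hc⟩ | ⟨d, rfl, rfl⟩
  · obtain ⟨hl, hc', hv'⟩ := append_eq_replicate_iff.mp hc.symm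
    obtain rfl := zeros hv hv'
    exact Or.inr (Or.inl ⟨c.length, by simpa using hl.symm, by simp [zeroPad, ← hc']⟩)
  rcases eq_or_ne m [] with rfl | hm0
  · obtain rfl := isUlam_replicate_false.1 (by simpa using hu)
    exact Or.inl ⟨0, rfl, by simp [zeroPad]⟩
  rcases eq_or_ne d [] with rfl | hd0
  · obtain rfl := isUlam_replicate_false.1 (by simpa using hv)
    exact Or.inr (Or.inl ⟨0, rfl, by simp [zeroPad]⟩)
  refine Or.inr (Or.inr ⟨m.length, length_pos_iff.mpr hm0, by simpa using length_pos_iff.mpr hd0,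
    by simp [zeroPad]⟩)

end zeroPad

section families

variable {a b : ℕ} {p : List Bool × List Bool}

lemma IsUlamSplit.zeroPad_true_cases (h : IsUlamSplit (zeroPad a [true] b) p) :
    (∃ a', a = a' + 1 ∧ p = ([false], zeroPad a' [true] b)) ∨
    (∃ b', b = b' + 1 ∧ p = (zeroPad a [true] b', [false])) := by
  rcases h.zeroPad_cases with h | h | ⟨k, hk0, hk, -⟩
  · exact Or.inl h
  · exact Or.inr h
  · simp only [length_singleton] at hk; omega

lemma IsUlamSplit.zeroPad_101_cases (h : IsUlamSplit (zeroPad a [true, false, true] b) p) :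
    (∃ a', a = a' + 1 ∧ p = ([false], zeroPad a' [true, false, true] b)) ∨
    (∃ b', b = b' + 1 ∧ p = (zeroPad a [true, false, true] b', [false])) ∨
    p = (zeroPad a [true] 0, zeroPad 1 [true] b) ∨
    p = (zeroPad a [true] 1, zeroPad 0 [true] b) := by
  rcases h.zeroPad_cases with h | h | ⟨k, hk0, hk, rfl⟩
  · exact Or.inl h
  · exact Or.inr (Or.inl h)
  · simp only [length_cons, length_nil] at hk
    interval_cases k <;> simp [zeroPad]

lemma IsUlamSplit.zeroPad_10101_cases
    (h : IsUlamSplit (zeroPad a [true, false, true, false, true] b) p) :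
    (∃ a', a = a' + 1 ∧ p = ([false], zeroPad a' [true, false, true, false, true] b)) ∨
    (∃ b', b = b' + 1 ∧ p = (zeroPad a [true, false, true, false, true] b', [false])) ∨
    p = (zeroPad a [true] 0, zeroPad 1 [true, false, true] b) ∨
    p = (zeroPad a [true] 1, zeroPad 0 [true, false, true] b) ∨
    p = (zeroPad a [true, false, true] 0, zeroPad 1 [true] b) ∨
    p = (zeroPad a [true, false, true] 1, zeroPad 0 [true] b) := by
  rcases h.zeroPad_cases with h | h | ⟨k, hk0, hk, rfl⟩
  · exact Or.inl h
  · exact Or.inr (Or.inl h)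
  · simp only [length_cons, length_nil] at hk
    interval_cases k <;> simp [zeroPad]

lemma isUlam_zeroPad_true_zero (a : ℕ) : IsUlam (zeroPad a [true] 0) := by
  induction a with
  | zero => exact isUlam_true
  | succ a ih =>
    refine isUlam_of_forall_split_eq (p := ([false], zeroPad a [true] 0)) (by simp)
      ⟨isUlam_false, ih, ne_of_apply_ne (count true) (by simp), zeroPad_succ_left.symm⟩ ?_
    rintro q hq
    rcases hq.zeroPad_true_cases with ⟨a', ha, rfl⟩ | ⟨b', hb, rfl⟩
    · cases ha; rfl
    · cases hb

lemma isUlam_zeroPad_zero_true (b : ℕ) : IsUlam (zeroPad 0 [true] b) :=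
  (isUlam_zeroPad_comm rfl).1 (isUlam_zeroPad_true_zero b)

lemma isUlam_zeroPad_true_one (a : ℕ) : IsUlam (zeroPad a [true] 1) ↔ Even a := by
  induction a with
  | zero => exact iff_of_true (isUlam_zeroPad_zero_true 1) Even.zero
  | succ a ih =>
    have hright : IsUlamSplit (zeroPad (a + 1) [true] 1) (zeroPad (a + 1) [true] 0, [false]) :=
      ⟨isUlam_zeroPad_true_zero _, isUlam_false, ne_of_apply_ne (count true) (by simp),
        zeroPad_succ_right.symm⟩
    rw [Nat.even_add_one, ← ih]
    constructor
    · intro hU hA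
      exact not_isUlam_of_split_ne (p := ([false], zeroPad a [true] 1)) (by simp)
        ⟨isUlam_false, hA, ne_of_apply_ne (count true) (by simp), zeroPad_succ_left.symm⟩ hright
        (ne_of_apply_ne (fun p => p.1.count true) (by simp)) hU
    · intro hA
      refine isUlam_of_forall_split_eq (by simp) hright fun q hq => ?_
      rcases hq.zeroPad_true_cases with ⟨a', ha, rfl⟩ | ⟨b', hb, rfl⟩
      · cases ha; exact absurd hq.2.1 hA
      · cases hb; rfl

lemma isUlam_zeroPad_one_true (b : ℕ) : IsUlam (zeroPad 1 [true] b) ↔ Even b :=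
  (isUlam_zeroPad_comm rfl).trans (isUlam_zeroPad_true_one b)

lemma isUlam_zeroPad_zero_101 (b : ℕ) :
    IsUlam (zeroPad 0 [true, false, true] b) ↔ Odd b ∧ 3 ≤ b := by
  have split_one {b : ℕ} (hb : Even b) : IsUlamSplit (zeroPad 0 [true, false, true] b)
      (zeroPad 0 [true] 0, zeroPad 1 [true] b) :=
    ⟨isUlam_true, (isUlam_zeroPad_one_true b).2 hb, ne_of_apply_ne length (by simp +arith),
      by simp [zeroPad]⟩
  have split_two {b : ℕ} (hb : b ≠ 1) : IsUlamSplit (zeroPad 0 [true, false, true] b)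
      (zeroPad 0 [true] 1, zeroPad 0 [true] b) :=
    ⟨isUlam_zeroPad_zero_true 1, isUlam_zeroPad_zero_true b,
      ne_of_apply_ne length (by simpa +arith using hb.symm), by simp [zeroPad]⟩
  have split_ne {b : ℕ} : (zeroPad 0 [true] 0, zeroPad 1 [true] b) ≠
      (zeroPad 0 [true] 1, zeroPad 0 [true] b) :=
    ne_of_apply_ne (fun p => p.1.length) (by simp)
  induction b with
  | zero =>
    exact iff_of_false (not_isUlam_of_split_ne (by simp +arith) (split_one Even.zero)
      (split_two (by omega)) split_ne) (by simp)
  | succ b ih =>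
    rcases Nat.even_or_odd (b + 1) with hE | hO
    · exact iff_of_false (not_isUlam_of_split_ne (by simp +arith) (split_one hE)
        (split_two (by grind)) split_ne) (by grind)
    rcases eq_or_ne b 0 with rfl | hb
    · refine iff_of_false
        (not_isUlam_of_forall_not_split (by simp +arith) fun q hq => ?_) (by simp)
      rcases hq.zeroPad_101_cases with ⟨a', ha, rfl⟩ | ⟨b', hb, rfl⟩ | rfl | rfl
      · cases ha
      · cases hb; exact absurd (ih.1 hq.1).2 (by omega)
      · exact absurd ((isUlam_zeroPad_one_true 1).1 hq.2.1) (by decide)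
      · exact hq.2.2.1 rfl
    · refine iff_of_true (isUlam_of_forall_split_eq (by simp +arith) (split_two (by omega))
        fun q hq => ?_) ⟨hO, by grind⟩
      rcases hq.zeroPad_101_cases with ⟨a', ha, rfl⟩ | ⟨b', hb, rfl⟩ | rfl | rfl
      · cases ha
      · cases hb; exact absurd (ih.1 hq.1).1 (by grind)
      · exact absurd ((isUlam_zeroPad_one_true _).1 hq.2.1) (by grind)
      · rfl

lemma isUlam_zeroPad_101_zero (a : ℕ) :
    IsUlam (zeroPad a [true, false, true] 0) ↔ Odd a ∧ 3 ≤ a :=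
  (isUlam_zeroPad_comm rfl).trans (isUlam_zeroPad_zero_101 a)

lemma isUlam_zeroPad_one_101 (b : ℕ) :
    IsUlam (zeroPad 1 [true, false, true] b) ↔ Even b ∧ 2 ≤ b := by
  have not_split_two {b : ℕ} :
      ¬ IsUlamSplit (zeroPad 1 [true, false, true] b) (zeroPad 1 [true] 1, zeroPad 0 [true] b) :=
    fun h => absurd ((isUlam_zeroPad_true_one 1).1 h.1) (by decide)
  induction b with
  | zero =>
    refine iff_of_false (not_isUlam_of_forall_not_split (by simp) fun q hq => ?_) (by simp)
    rcases hq.zeroPad_101_cases with ⟨a', ha, rfl⟩ | ⟨b', hb, rfl⟩ | rfl | rfl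
    · cases ha; exact absurd ((isUlam_zeroPad_zero_101 0).1 hq.2.1).2 (by omega)
    · cases hb
    · exact hq.2.2.1 rfl
    · exact not_split_two hq
  | succ b ih =>
    rcases Nat.even_or_odd (b + 1) with hE | hO
    · refine iff_of_true (isUlam_of_forall_split_eq
        (p := (zeroPad 1 [true] 0, zeroPad 1 [true] (b + 1))) (by simp +arith)
        ⟨isUlam_zeroPad_true_zero 1, (isUlam_zeroPad_one_true _).2 hE,
          ne_of_apply_ne length (by simp +arith), by simp [zeroPad]⟩ fun q hq => ?_)
        ⟨hE, by grind⟩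
      rcases hq.zeroPad_101_cases with ⟨a', ha, rfl⟩ | ⟨b', hb, rfl⟩ | rfl | rfl
      · cases ha; exact absurd ((isUlam_zeroPad_zero_101 _).1 hq.2.1).1 (by grind)
      · cases hb; exact absurd (ih.1 hq.1).1 (by grind)
      · rfl
      · exact absurd hq not_split_two
    rcases eq_or_ne b 0 with rfl | hb
    · refine iff_of_false (not_isUlam_of_forall_not_split (by simp) fun q hq => ?_) (by simp)
      rcases hq.zeroPad_101_cases with ⟨a', ha, rfl⟩ | ⟨b', hb, rfl⟩ | rfl | rfl
      · cases ha; exact absurd ((isUlam_zeroPad_zero_101 1).1 hq.2.1).2 (by omega)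
      · cases hb; exact absurd (ih.1 hq.1).2 (by omega)
      · exact absurd ((isUlam_zeroPad_one_true 1).1 hq.2.1) (by decide)
      · exact not_split_two hq
    · refine iff_of_false (not_isUlam_of_split_ne (by simp +arith)
        (p := ([false], zeroPad 0 [true, false, true] (b + 1)))
        (q := (zeroPad 1 [true, false, true] b, [false]))
        ⟨isUlam_false, (isUlam_zeroPad_zero_101 _).2 ⟨hO, by grind⟩,
          ne_of_apply_ne (count true) (by simp), zeroPad_succ_left.symm⟩
        ⟨ih.2 ⟨by grind, by grind⟩, isUlam_false, ne_of_apply_ne (count true) (by simp),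
          zeroPad_succ_right.symm⟩
        (ne_of_apply_ne (fun p => p.1.count true) (by simp))) (by grind)

lemma isUlam_zeroPad_101_one (a : ℕ) :
    IsUlam (zeroPad a [true, false, true] 1) ↔ Even a ∧ 2 ≤ a :=
  (isUlam_zeroPad_comm rfl).trans (isUlam_zeroPad_one_101 a)

lemma not_isUlam_zeroPad_zero_10101_zero :
    ¬ IsUlam (zeroPad 0 [true, false, true, false, true] 0) := by
  refine not_isUlam_of_forall_not_split (by simp) fun q hq => ?_
  rcases hq.zeroPad_10101_cases with ⟨a', ha, rfl⟩ | ⟨b', hb, rfl⟩ | rfl | rfl | rfl | rfl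
  · cases ha
  · cases hb
  · exact absurd ((isUlam_zeroPad_one_101 0).1 hq.2.1).2 (by omega)
  · exact absurd ((isUlam_zeroPad_zero_101 0).1 hq.2.1).2 (by omega)
  · exact absurd ((isUlam_zeroPad_zero_101 0).1 hq.1).2 (by omega)
  · exact absurd ((isUlam_zeroPad_zero_101 1).1 hq.1).2 (by omega)

lemma not_isUlam_zeroPad_zero_10101_one :
    ¬ IsUlam (zeroPad 0 [true, false, true, false, true] 1) := by
  refine not_isUlam_of_forall_not_split (by simp) fun q hq => ?_
  rcases hq.zeroPad_10101_cases with ⟨a', ha, rfl⟩ | ⟨b', hb, rfl⟩ | rfl | rfl | rfl | rfl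
  · cases ha
  · cases hb; exact not_isUlam_zeroPad_zero_10101_zero hq.1
  · exact absurd ((isUlam_zeroPad_one_101 1).1 hq.2.1).2 (by omega)
  · exact absurd ((isUlam_zeroPad_zero_101 1).1 hq.2.1).2 (by omega)
  · exact absurd ((isUlam_zeroPad_zero_101 0).1 hq.1).2 (by omega)
  · exact absurd ((isUlam_zeroPad_zero_101 1).1 hq.1).2 (by omega)

lemma isUlam_zeroPad_zero_10101 (b : ℕ) :
    IsUlam (zeroPad 0 [true, false, true, false, true] b) ↔ Even b ∧ 2 ≤ b := by
  induction b with
  | zero => exact iff_of_false not_isUlam_zeroPad_zero_10101_zero (by simp)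
  | succ b ih =>
    rcases Nat.even_or_odd (b + 1) with hE | hO
    · refine iff_of_true (isUlam_of_forall_split_eq
        (p := (zeroPad 0 [true] 0, zeroPad 1 [true, false, true] (b + 1))) (by simp +arith)
        ⟨isUlam_true, (isUlam_zeroPad_one_101 _).2 ⟨hE, by grind⟩,
          ne_of_apply_ne (count true) (by simp), by simp [zeroPad]⟩ fun q hq => ?_)
        ⟨hE, by grind⟩
      rcases hq.zeroPad_10101_cases with
        ⟨a', ha, rfl⟩ | ⟨b', hb, rfl⟩ | rfl | rfl | rfl | rfl
      · cases ha
      · cases hb; exact absurd (ih.1 hq.1).1 (by grind)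
      · rfl
      · exact absurd ((isUlam_zeroPad_zero_101 _).1 hq.2.1).1 (by grind)
      · exact absurd ((isUlam_zeroPad_zero_101 0).1 hq.1).2 (by omega)
      · exact absurd ((isUlam_zeroPad_zero_101 1).1 hq.1).2 (by omega)
    rcases eq_or_ne b 0 with rfl | hb
    · exact iff_of_false not_isUlam_zeroPad_zero_10101_one (by simp)
    · refine iff_of_false (not_isUlam_of_split_ne (by simp +arith)
        (p := (zeroPad 0 [true, false, true, false, true] b, [false]))
        (q := (zeroPad 0 [true] 1, zeroPad 0 [true, false, true] (b + 1)))
        ⟨ih.2 ⟨by grind, by grind⟩, isUlam_false, ne_of_apply_ne (count true) (by simp),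
          zeroPad_succ_right.symm⟩
        ⟨isUlam_zeroPad_zero_true 1, (isUlam_zeroPad_zero_101 _).2 ⟨hO, by grind⟩,
          ne_of_apply_ne (count true) (by simp), by simp [zeroPad]⟩
        (ne_of_apply_ne (fun p => p.1.count true) (by simp))) (by grind)

lemma isUlam_zeroPad_10101_zero (a : ℕ) :
    IsUlam (zeroPad a [true, false, true, false, true] 0) ↔ Even a ∧ 2 ≤ a :=
  (isUlam_zeroPad_comm rfl).trans (isUlam_zeroPad_zero_10101 a)

lemma not_isUlam_zeroPad_10101_of_even_left (ha : Even a) (ha0 : a ≠ 0) (hb0 : b ≠ 0) :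
    ¬ IsUlam (zeroPad a [true, false, true, false, true] b) := by
  have split_four : IsUlamSplit (zeroPad a [true, false, true, false, true] b)
      (zeroPad a [true, false, true] 1, zeroPad 0 [true] b) :=
    ⟨(isUlam_zeroPad_101_one a).2 ⟨ha, by grind⟩, isUlam_zeroPad_zero_true b,
      ne_of_apply_ne (count true) (by simp), by simp [zeroPad]⟩
  have hlen : 2 ≤ (zeroPad a [true, false, true, false, true] b).length := by simp +arith
  rcases Nat.even_or_odd b with hb | hb
  · refine not_isUlam_of_split_ne hlen (p := (zeroPad a [true] 0, zeroPad 1 [true, false, true] b))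
      ⟨isUlam_zeroPad_true_zero a, (isUlam_zeroPad_one_101 b).2 ⟨hb, by grind⟩,
        ne_of_apply_ne (count true) (by simp), by simp [zeroPad]⟩
      split_four (ne_of_apply_ne (fun p => p.1.count true) (by simp))
  obtain rfl | hb1 := eq_or_ne b 1
  · exact not_isUlam_of_split_ne hlen
      (p := (zeroPad a [true, false, true, false, true] 0, [false]))
      ⟨(isUlam_zeroPad_10101_zero a).2 ⟨ha, by grind⟩, isUlam_false,
        ne_of_apply_ne (count true) (by simp), zeroPad_succ_right.symm⟩
      split_four (ne_of_apply_ne (fun p => p.1.count true) (by simp))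
  · exact not_isUlam_of_split_ne hlen (p := (zeroPad a [true] 1, zeroPad 0 [true, false, true] b))
      ⟨(isUlam_zeroPad_true_one a).2 ha, (isUlam_zeroPad_zero_101 b).2 ⟨hb, by grind⟩,
        ne_of_apply_ne (count true) (by simp), by simp [zeroPad]⟩
      split_four (ne_of_apply_ne (fun p => p.1.count true) (by simp))

lemma not_isUlam_zeroPad_10101_of_odd (ha : Odd a) (hb : Odd b) :
    ¬ IsUlam (zeroPad a [true, false, true, false, true] b) := by
  refine not_isUlam_of_forall_not_split (by simp +arith) fun q hq => ?_
  rcases hq.zeroPad_10101_cases with ⟨a', rfl, rfl⟩ | ⟨b', rfl, rfl⟩ | rfl | rfl | rfl | rfl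
  · obtain rfl | ha' := eq_or_ne a' 0
    · exact absurd ((isUlam_zeroPad_zero_10101 b).1 hq.2.1).1 (by grind)
    · exact not_isUlam_zeroPad_10101_of_even_left (by grind) ha' (by grind) hq.2.1
  · obtain rfl | hb' := eq_or_ne b' 0
    · exact absurd ((isUlam_zeroPad_10101_zero a).1 hq.1).1 (by grind)
    · refine not_isUlam_zeroPad_10101_of_even_left (by grind) hb' (by grind)
        ((isUlam_zeroPad_comm rfl).1 hq.1)
  · exact absurd ((isUlam_zeroPad_one_101 b).1 hq.2.1).1 (by grind)
  · exact absurd ((isUlam_zeroPad_true_one a).1 hq.1) (by grind)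
  · exact absurd ((isUlam_zeroPad_one_true b).1 hq.2.1) (by grind)
  · exact absurd ((isUlam_zeroPad_101_one a).1 hq.1).1 (by grind)

lemma not_isUlam_zeroPad_10101 (ha : a ≠ 0) (hb : b ≠ 0) :
    ¬ IsUlam (zeroPad a [true, false, true, false, true] b) := by
  rcases Nat.even_or_odd a with hea | hoa
  · exact not_isUlam_zeroPad_10101_of_even_left hea ha hb
  rcases Nat.even_or_odd b with heb | hob
  · rw [isUlam_zeroPad_comm rfl]
    exact not_isUlam_zeroPad_10101_of_even_left heb hb ha
  · exact not_isUlam_zeroPad_10101_of_odd hoa hob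

end families

theorem ulam_10101 (a b : ℕ) (hab : 1 ≤ a + b) :
    IsUlam (List.replicate a false ++ [true, false, true, false, true] ++
        List.replicate b false) ↔
      Even a ∧ Even b ∧ (a = 0 ∨ b = 0) := by
  change IsUlam (zeroPad a _ b) ↔ _
  rcases eq_or_ne a 0 with rfl | ha
  · rw [isUlam_zeroPad_zero_10101]
    grind
  rcases eq_or_ne b 0 with rfl | hb
  · rw [isUlam_zeroPad_10101_zero]
    grind
  · exact iff_of_false (not_isUlam_zeroPad_10101 ha hb) (by tauto)
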